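/- (Proposition 3.) Consider the error system s_{k+1} = A_K s_k + w_k, where w_0, w_1, … : Ω → ℝⁿ are independent random vectors with finite second moments, each with mean μ_ω ∈ ℝⁿ and positive definite covariance matrix Σ_ω. Let ε ∈ (0,1) and let R^ε ⊆ ℝⁿ be a set satisfying A_K R^ε ⊕ E(Σ_ω, μ_ω, n/ε) ⊆ R^ε. Then R^ε is probabilistic positively invariant with probability 1 − ε: for every deterministic initial condition s_0 ∈ R^ε and every k ≥ 1, P(s_k ∈ R^ε) ≥ 1 − ε. -/

import Mathlib

open MeasureTheory Matrix Pointwise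
open scoped Classical

/-- The positive semidefinite square root of a matrix (junk value `0` if the matrix is not
positive semidefinite). -/
noncomputable def msqrt {n : ℕ} (M : Matrix (Fin n) (Fin n) ℝ) : Matrix (Fin n) (Fin n) ℝ :=
  if h : M.PosSemidef then
    h.1.eigenvectorUnitary.1 * diagonal ((↑) ∘ Real.sqrt ∘ h.1.eigenvalues) *
      (star h.1.eigenvectorUnitary : Matrix (Fin n) (Fin n) ℝ) else 0

/-- The ellipsoid `E(M, c, r) = {c + M^{1/2} x : xᵀ x ≤ r}` with shape matrix `M`,
center `c` and radius `√r`. -/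
noncomputable def ellipsoid {n : ℕ} (M : Matrix (Fin n) (Fin n) ℝ) (c : Fin n → ℝ) (r : ℝ) :
    Set (Fin n → ℝ) :=
  {x | ∃ y : Fin n → ℝ, y ⬝ᵥ y ≤ r ∧ x = c + (msqrt M).mulVec y}

namespace PPI
variable {n : ℕ}

lemma msqrt_psd {M : Matrix (Fin n) (Fin n) ℝ} (hM : M.PosSemidef) :
    (msqrt M).PosSemidef := by
  rw [msqrt, dif_pos hM]
  have hD : (diagonal ((↑) ∘ Real.sqrt ∘ hM.1.eigenvalues) : Matrix (Fin n) (Fin n) ℝ).PosSemidef :=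
    PosSemidef.diagonal fun i => by simp [Real.sqrt_nonneg]
  simpa [Matrix.star_eq_conjTranspose] using hD.mul_mul_conjTranspose_same hM.1.eigenvectorUnitary.1

lemma msqrt_mul_self {M : Matrix (Fin n) (Fin n) ℝ} (hM : M.PosSemidef) :
    msqrt M * msqrt M = M := by
  rw [msqrt, dif_pos hM]
  have hU : (star hM.1.eigenvectorUnitary : Matrix (Fin n) (Fin n) ℝ) * hM.1.eigenvectorUnitary.1 = 1 :=
    Unitary.coe_star_mul_self _
  conv_rhs => rw [hM.1.spectral_theorem, Unitary.conjStarAlgAut_apply]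
  simp only [Matrix.mul_assoc]
  rw [← Matrix.mul_assoc _ (hM.1.eigenvectorUnitary.1), hU, Matrix.one_mul,
    ← Matrix.mul_assoc (diagonal _), diagonal_mul_diagonal]
  congr 3
  funext i
  simp [Real.mul_self_sqrt (hM.eigenvalues_nonneg i)]

lemma msqrt_transpose {M : Matrix (Fin n) (Fin n) ℝ} (hM : M.PosSemidef) :
    (msqrt M)ᵀ = msqrt M := by
  have h := (msqrt_psd hM).isHermitian
  simpa [Matrix.IsHermitian, Matrix.conjTranspose_eq_transpose_of_trivial] using h

lemma psd_quad_nonneg {M : Matrix (Fin n) (Fin n) ℝ} (hM : M.PosSemidef) (x : Fin n → ℝ) :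
    0 ≤ x ⬝ᵥ M.mulVec x := by simpa using hM.dotProduct_mulVec_nonneg x

lemma dot_mulVec_left (C : Matrix (Fin n) (Fin n) ℝ) (x y : Fin n → ℝ) :
    (C.mulVec x) ⬝ᵥ y = x ⬝ᵥ (Cᵀ.mulVec y) := by
  simp only [dotProduct, mulVec, Matrix.transpose_apply, Finset.sum_mul, Finset.mul_sum]
  rw [Finset.sum_comm]
  exact Finset.sum_congr rfl fun j _ => Finset.sum_congr rfl fun i _ => by ring

end PPI

lemma PPI.msqrt_det_isUnit {n : ℕ} {M : Matrix (Fin n) (Fin n) ℝ} (hM : M.PosDef) :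
    IsUnit (msqrt M).det := by
  have h : (msqrt M).det * (msqrt M).det = M.det := by
    rw [← Matrix.det_mul, PPI.msqrt_mul_self hM.posSemidef]
  have : M.det ≠ 0 := ne_of_gt hM.det_pos
  exact isUnit_iff_ne_zero.mpr (fun h0 => this (by rw [← h, h0, mul_zero]))

lemma PPI.quad_sq {n : ℕ} {M : Matrix (Fin n) (Fin n) ℝ} (hM : M.PosSemidef)
    (v : Fin n → ℝ) :
    (msqrt M).mulVec v ⬝ᵥ (msqrt M).mulVec v = v ⬝ᵥ M.mulVec v := by
  rw [PPI.dot_mulVec_left, PPI.msqrt_transpose hM, Matrix.mulVec_mulVec,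
    PPI.msqrt_mul_self hM]

lemma PPI.mem_ellipsoid_of_quad {n : ℕ} {M : Matrix (Fin n) (Fin n) ℝ} (hM : M.PosDef)
    {c x : Fin n → ℝ} {r : ℝ} (h : (x - c) ⬝ᵥ M⁻¹.mulVec (x - c) ≤ r) :
    x ∈ ellipsoid M c r := by
  set T := msqrt M with hT
  have hdet := PPI.msqrt_det_isUnit hM
  refine ⟨T⁻¹.mulVec (x - c), ?_, ?_⟩
  · have h1 : (T⁻¹)ᵀ = T⁻¹ := by
      rw [Matrix.transpose_nonsing_inv, PPI.msqrt_transpose hM.posSemidef]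
    calc T⁻¹.mulVec (x - c) ⬝ᵥ T⁻¹.mulVec (x - c)
        = (x - c) ⬝ᵥ ((T⁻¹)ᵀ * T⁻¹).mulVec (x - c) := by
          rw [PPI.dot_mulVec_left, Matrix.mulVec_mulVec]
      _ = (x - c) ⬝ᵥ M⁻¹.mulVec (x - c) := by
          rw [h1, ← Matrix.mul_inv_rev, PPI.msqrt_mul_self hM.posSemidef]
      _ ≤ r := h
  · rw [Matrix.mulVec_mulVec, Matrix.mul_nonsing_inv _ hdet, Matrix.one_mulVec]
    abel

lemma PPI.psd_mul_mul_transpose {n : ℕ} {M : Matrix (Fin n) (Fin n) ℝ} (hM : M.PosSemidef)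
    (A : Matrix (Fin n) (Fin n) ℝ) : (A * M * Aᵀ).PosSemidef := by
  have := hM.mul_mul_conjTranspose_same A
  rwa [Matrix.conjTranspose_eq_transpose_of_trivial] at this

lemma PPI.dot_mulVec_right (C : Matrix (Fin n) (Fin n) ℝ) (x y : Fin n → ℝ) :
    x ⬝ᵥ (C.mulVec y) = (Cᵀ.mulVec x) ⬝ᵥ y := by
  rw [PPI.dot_mulVec_left, Matrix.transpose_transpose]

lemma PPI.ellipsoid_subset_add {n : ℕ} (A : Matrix (Fin n) (Fin n) ℝ)
    {M N : Matrix (Fin n) (Fin n) ℝ} (hM : M.PosSemidef) (hN : N.PosDef)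
    (c d : Fin n → ℝ) (r : ℝ) :
    ellipsoid (A * M * Aᵀ + N) (A.mulVec c + d) r ⊆
      (A.mulVec '' ellipsoid M c r) + ellipsoid N d r := by
  have hS : (A * M * Aᵀ + N).PosDef :=
    Matrix.PosDef.posSemidef_add (PPI.psd_mul_mul_transpose hM A) hN
  set S := A * M * Aᵀ + N with hSdef
  set T := msqrt S with hT
  have hdet := PPI.msqrt_det_isUnit hS
  have hTsym : Tᵀ = T := PPI.msqrt_transpose hS.posSemidef
  have hTT : T * T = S := PPI.msqrt_mul_self hS.posSemidef
  have hST : S * T⁻¹ = T := by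
    rw [← hTT, Matrix.mul_assoc, Matrix.mul_nonsing_inv _ hdet, Matrix.mul_one]
  rintro x ⟨y, hy, rfl⟩
  obtain ⟨v, hv⟩ : ∃ v, v = T⁻¹.mulVec y := ⟨_, rfl⟩
  have hTv : T.mulVec v = y := by
    rw [hv, Matrix.mulVec_mulVec, Matrix.mul_nonsing_inv _ hdet, Matrix.one_mulVec]
  obtain ⟨z1, hz1⟩ : ∃ z1, z1 = (msqrt M).mulVec (Aᵀ.mulVec v) := ⟨_, rfl⟩
  obtain ⟨z2, hz2⟩ : ∃ z2, z2 = (msqrt N).mulVec v := ⟨_, rfl⟩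
  have hq1 : z1 ⬝ᵥ z1 = v ⬝ᵥ (A * M * Aᵀ).mulVec v := by
    rw [hz1, PPI.quad_sq hM, PPI.dot_mulVec_left, Matrix.transpose_transpose,
      Matrix.mulVec_mulVec, Matrix.mulVec_mulVec, Matrix.mul_assoc]
  have hq2 : z2 ⬝ᵥ z2 = v ⬝ᵥ N.mulVec v := by rw [hz2]; exact PPI.quad_sq hN.posSemidef v
  have hsum : z1 ⬝ᵥ z1 + z2 ⬝ᵥ z2 = y ⬝ᵥ y := by
    rw [hq1, hq2, ← dotProduct_add, ← Matrix.add_mulVec, ← hSdef, ← hTT,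
      ← Matrix.mulVec_mulVec, hTv, PPI.dot_mulVec_right, hTsym, hTv]
  have h1nn : 0 ≤ z1 ⬝ᵥ z1 := Finset.sum_nonneg fun i _ => mul_self_nonneg _
  have h2nn : 0 ≤ z2 ⬝ᵥ z2 := Finset.sum_nonneg fun i _ => mul_self_nonneg _
  have hpt : A.mulVec c + d + T.mulVec y =
      A.mulVec (c + (msqrt M).mulVec z1) + (d + (msqrt N).mulVec z2) := by
    have e1 : A.mulVec ((msqrt M).mulVec z1) + (msqrt N).mulVec z2 = T.mulVec y := by
      rw [hz1, hz2]
      simp only [Matrix.mulVec_mulVec]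
      rw [show A * (msqrt M * (msqrt M * Aᵀ)) = A * M * Aᵀ by
          rw [← Matrix.mul_assoc (msqrt M), PPI.msqrt_mul_self hM, ← Matrix.mul_assoc],
        PPI.msqrt_mul_self hN.posSemidef, ← Matrix.add_mulVec, ← hSdef, hv,
        Matrix.mulVec_mulVec, hST]
    rw [Matrix.mulVec_add, ← e1]
    abel
  rw [hpt]
  exact Set.add_mem_add
    (Set.mem_image_of_mem _ ⟨z1, by linarith, rfl⟩) ⟨z2, by linarith, rfl⟩

lemma PPI.integrable_mul2 {Ω : Type*} [MeasurableSpace Ω] {ℙ : Measure Ω} {f g : Ω → ℝ}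
    (hf : MemLp f 2 ℙ) (hg : MemLp g 2 ℙ) : Integrable (fun ω => f ω * g ω) ℙ := by
  have h : MemLp (f • g) 1 ℙ := MemLp.smul hg hf
  exact memLp_one_iff_integrable.mp h

lemma PPI.cov_sum {Ω : Type*} [MeasurableSpace Ω] (ℙ : Measure Ω) [IsProbabilityMeasure ℙ]
    {n : ℕ} (w : ℕ → Ω → (Fin n → ℝ))
    (hwindep : ProbabilityTheory.iIndepFun w ℙ)
    (hw2 : ∀ k i, MemLp (fun ω => w k ω i) 2 ℙ)
    (μω : Fin n → ℝ) (hwmean : ∀ k i, ∫ ω, w k ω i ∂ℙ = μω i)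
    (Sω : Matrix (Fin n) (Fin n) ℝ)
    (hwcov : ∀ k i j, ∫ ω, (w k ω i - μω i) * (w k ω j - μω j) ∂ℙ = Sω i j)
    (k : ℕ) (B : ℕ → Matrix (Fin n) (Fin n) ℝ) (i j : Fin n) :
    ∫ ω, (∑ a ∈ Finset.range k, (B a).mulVec (w a ω - μω) i) *
          (∑ a ∈ Finset.range k, (B a).mulVec (w a ω - μω) j) ∂ℙ
      = (∑ a ∈ Finset.range k, B a * Sω * (B a)ᵀ) i j := by
  have L1 : ∀ a p, MemLp (fun ω => w a ω p - μω p) 2 ℙ :=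
    fun a p => (hw2 a p).sub (memLp_const _)
  have L1int : ∀ a p, Integrable (fun ω => w a ω p - μω p) ℙ :=
    fun a p => (L1 a p).integrable one_le_two
  have L1mean : ∀ a p, ∫ ω, (w a ω p - μω p) ∂ℙ = 0 := by
    intro a p
    rw [integral_sub ((hw2 a p).integrable one_le_two) (integrable_const _)]
    simp [hwmean a p]
  have L2 : ∀ a (i : Fin n), MemLp (fun ω => (B a).mulVec (w a ω - μω) i) 2 ℙ := by
    intro a i
    have h : (fun ω => (B a).mulVec (w a ω - μω) i)
        = fun ω => ∑ p, B a i p * (w a ω p - μω p) := by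
      funext ω; simp [Matrix.mulVec, dotProduct]
    rw [h]
    exact memLp_finset_sum _ fun p _ => (L1 a p).const_mul _
  have L3 : ∀ a b (p q : Fin n),
      Integrable (fun ω => (w a ω p - μω p) * (w b ω q - μω q)) ℙ :=
    fun a b p q => PPI.integrable_mul2 (L1 a p) (L1 b q)
  have L4 : ∀ a b (p q : Fin n), a ≠ b →
      ∫ ω, (w a ω p - μω p) * (w b ω q - μω q) ∂ℙ = 0 := by
    intro a b p q hab
    have hind := (hwindep.indepFun hab).comp
      ((measurable_pi_apply p).sub (measurable_const (a := μω p)))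
      ((measurable_pi_apply q).sub (measurable_const (a := μω q)))
    have h0 : ∫ ω, ((fun v : Fin n → ℝ => v p - μω p) ∘ w a * (fun v : Fin n → ℝ => v q - μω q) ∘ w b) ω ∂ℙ
        = (∫ ω, ((fun v : Fin n → ℝ => v p - μω p) ∘ w a) ω ∂ℙ) *
          ∫ ω, ((fun v : Fin n → ℝ => v q - μω q) ∘ w b) ω ∂ℙ :=
      ProbabilityTheory.IndepFun.integral_mul_eq_mul_integral hind (L1int a p).1 (L1int b q).1
    have h3 : ((fun v : Fin n → ℝ => v p - μω p) ∘ w a * (fun v : Fin n → ℝ => v q - μω q) ∘ w b)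
        = fun ω => (w a ω p - μω p) * (w b ω q - μω q) := rfl
    rw [h3] at h0
    rw [h0]
    have h4 : ((fun v : Fin n → ℝ => v p - μω p) ∘ w a) = fun ω => w a ω p - μω p := rfl
    have h5 : ((fun v : Fin n → ℝ => v q - μω q) ∘ w b) = fun ω => w b ω q - μω q := rfl
    rw [h4, h5, L1mean, L1mean, mul_zero]
  have Tint : ∀ a b, Integrable
      (fun ω => (B a).mulVec (w a ω - μω) i * (B b).mulVec (w b ω - μω) j) ℙ :=
    fun a b => PPI.integrable_mul2 (L2 a i) (L2 b j)
  have TT : ∀ a b, ∫ ω, (B a).mulVec (w a ω - μω) i * (B b).mulVec (w b ω - μω) j ∂ℙ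
      = if a = b then (B a * Sω * (B a)ᵀ) i j else 0 := by
    intro a b
    have hexp : (fun ω => (B a).mulVec (w a ω - μω) i * (B b).mulVec (w b ω - μω) j)
        = fun ω => ∑ p, ∑ q, (B a i p * B b j q) *
            ((w a ω p - μω p) * (w b ω q - μω q)) := by
      funext ω
      simp only [Matrix.mulVec, dotProduct, Pi.sub_apply, Finset.sum_mul_sum]
      exact Finset.sum_congr rfl fun p _ => Finset.sum_congr rfl fun q _ => by ring
    rw [hexp, integral_finset_sum _
      (fun p _ => integrable_finset_sum _ (fun q _ => (L3 a b p q).const_mul _))]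
    have hinner : ∀ p, ∫ ω, ∑ q, (B a i p * B b j q) *
          ((w a ω p - μω p) * (w b ω q - μω q)) ∂ℙ
        = ∑ q, (B a i p * B b j q) * (∫ ω, (w a ω p - μω p) * (w b ω q - μω q) ∂ℙ) := by
      intro p
      rw [integral_finset_sum _ (fun q _ => (L3 a b p q).const_mul _)]
      exact Finset.sum_congr rfl fun q _ => integral_const_mul _ _
    rw [Finset.sum_congr rfl (fun p _ => hinner p)]
    by_cases hab : a = b
    · subst hab
      simp only [if_pos rfl, hwcov a]
      rw [Matrix.mul_apply]
      simp only [Matrix.mul_apply, Matrix.transpose_apply, Finset.sum_mul]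
      rw [Finset.sum_comm]
      exact Finset.sum_congr rfl fun p _ => Finset.sum_congr rfl fun q _ => by ring
    · simp [L4 a b _ _ hab, if_neg hab]
  have hfull : (fun ω => (∑ a ∈ Finset.range k, (B a).mulVec (w a ω - μω) i) *
        (∑ a ∈ Finset.range k, (B a).mulVec (w a ω - μω) j))
      = fun ω => ∑ a ∈ Finset.range k, ∑ b ∈ Finset.range k,
          (B a).mulVec (w a ω - μω) i * (B b).mulVec (w b ω - μω) j := by
    funext ω; exact Finset.sum_mul_sum _ _ _ _
  rw [hfull, integral_finset_sum _
    (fun a _ => integrable_finset_sum _ fun b _ => Tint a b)]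
  have : ∀ a, ∫ ω, ∑ b ∈ Finset.range k,
        (B a).mulVec (w a ω - μω) i * (B b).mulVec (w b ω - μω) j ∂ℙ
      = ∑ b ∈ Finset.range k, if a = b then (B a * Sω * (B a)ᵀ) i j else 0 := by
    intro a
    rw [integral_finset_sum _ (fun b _ => Tint a b)]
    exact Finset.sum_congr rfl fun b _ => TT a b
  rw [Finset.sum_congr rfl (fun a _ => this a), Matrix.sum_apply]
  exact Finset.sum_congr rfl fun a ha => by
    rw [Finset.sum_ite_eq, if_pos ha]

lemma PPI.msqrt_zero {n : ℕ} : msqrt (0 : Matrix (Fin n) (Fin n) ℝ) = 0 := by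
  have h0 : (0 : Matrix (Fin n) (Fin n) ℝ).PosSemidef := Matrix.PosSemidef.zero
  apply Matrix.conjTranspose_mul_self_eq_zero.mp
  rw [Matrix.conjTranspose_eq_transpose_of_trivial, PPI.msqrt_transpose h0, PPI.msqrt_mul_self h0]

lemma PPI.mulVec_sum {n : ℕ} {ι : Type*} (A : Matrix (Fin n) (Fin n) ℝ) (s : Finset ι)
    (f : ι → Fin n → ℝ) : A.mulVec (∑ j ∈ s, f j) = ∑ j ∈ s, A.mulVec (f j) := by
  simpa only [Matrix.mulVecLin_apply] using map_sum A.mulVecLin f s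

lemma PPI.measurable_mulVec {Ω : Type*} [MeasurableSpace Ω] {n : ℕ}
    (A : Matrix (Fin n) (Fin n) ℝ) {f : Ω → Fin n → ℝ} (hf : Measurable f) :
    Measurable (fun ω => A.mulVec (f ω)) := by
  apply measurable_pi_lambda
  intro i
  simp only [Matrix.mulVec, dotProduct]
  exact Finset.measurable_sum _ fun j _ =>
    (measurable_const.mul ((measurable_pi_apply j).comp hf))

/-- **Proposition 3.** For the error system `s_{k+1} = A_K s_k + w_k` with
independent disturbances with finite second moments, mean `μ_ω` and positive definite
covariance `Σ_ω`, any set `R^ε` with `A_K R^ε ⊕ E(Σ_ω, μ_ω, n/ε) ⊆ R^ε` is probabilistic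
positively invariant with probability `1 − ε`: for every deterministic initial condition
`s_0 ∈ R^ε` and every `k ≥ 1`, `P(s_k ∈ R^ε) ≥ 1 − ε`. -/
theorem probabilistic_positive_invariance
    {Ω : Type*} [MeasurableSpace Ω] (ℙ : Measure Ω) [IsProbabilityMeasure ℙ]
    {n : ℕ} (AK : Matrix (Fin n) (Fin n) ℝ)
    (w : ℕ → Ω → (Fin n → ℝ)) (hwmeas : ∀ k, Measurable (w k))
    (hwindep : ProbabilityTheory.iIndepFun w ℙ)
    (hw2 : ∀ k i, MemLp (fun ω => w k ω i) 2 ℙ)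
    (μω : Fin n → ℝ) (hwmean : ∀ k i, ∫ ω, w k ω i ∂ℙ = μω i)
    (Sω : Matrix (Fin n) (Fin n) ℝ)
    (hwcov : ∀ k i j, ∫ ω, (w k ω i - μω i) * (w k ω j - μω j) ∂ℙ = Sω i j)
    (hSωpd : Sω.PosDef)
    (ε : ℝ) (hε : ε ∈ Set.Ioo (0 : ℝ) 1)
    (Rε : Set (Fin n → ℝ))
    (hinv : AK.mulVec '' Rε + ellipsoid Sω μω ((n : ℝ) / ε) ⊆ Rε)
    (s0 : Fin n → ℝ) (hs0 : s0 ∈ Rε)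
    (s : ℕ → Ω → (Fin n → ℝ))
    (hs0' : s 0 = fun _ => s0)
    (hs : ∀ k ω, s (k + 1) ω = AK.mulVec (s k ω) + w k ω) :
    ∀ k, 1 ≤ k → ENNReal.ofReal (1 - ε) ≤ ℙ {ω | s k ω ∈ Rε} := by
  intro k hk
  obtain ⟨hε0, hε1⟩ := hε
  -- trivial case `n = 0`
  rcases Nat.eq_zero_or_pos n with hn | hn
  · subst hn
    have hall : ∀ ω, s k ω ∈ Rε := by
      intro ω
      have : s k ω = s0 := funext fun i => i.elim0
      rw [this]; exact hs0
    have huniv : {ω | s k ω ∈ Rε} = Set.univ := Set.eq_univ_of_forall hall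
    rw [huniv, measure_univ]
    exact ENNReal.ofReal_le_one.mpr (by linarith)
  obtain ⟨m, rfl⟩ : ∃ m, k = m + 1 := ⟨k - 1, by omega⟩
  set r : ℝ := (n : ℝ) / ε with hr
  set Sk : ℕ → Matrix (Fin n) (Fin n) ℝ :=
    fun K => ∑ j ∈ Finset.range K, AK ^ j * Sω * (AK ^ j)ᵀ with hSk
  set mk : ℕ → (Fin n → ℝ) :=
    fun K => (AK ^ K).mulVec s0 + ∑ j ∈ Finset.range K, (AK ^ j).mulVec μω with hmk
  -- recurrences
  have hSkrec : ∀ K, Sk (K + 1) = AK * Sk K * AKᵀ + Sω := by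
    intro K
    rw [hSk]
    simp only
    rw [Finset.sum_range_succ']
    congr 1
    · rw [Finset.mul_sum, Finset.sum_mul]
      refine Finset.sum_congr rfl fun j _ => ?_
      rw [pow_succ', Matrix.transpose_mul]
      simp only [Matrix.mul_assoc]
    · simp
  have hmkrec : ∀ K, mk (K + 1) = AK.mulVec (mk K) + μω := by
    intro K
    rw [hmk]
    simp only
    rw [Finset.sum_range_succ', Matrix.mulVec_add, PPI.mulVec_sum]
    have h1 : (AK ^ (K + 1)).mulVec s0 = AK.mulVec ((AK ^ K).mulVec s0) := by
      rw [Matrix.mulVec_mulVec, ← pow_succ']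
    have h2 : ∀ j, (AK ^ (j + 1)).mulVec μω = AK.mulVec ((AK ^ j).mulVec μω) := by
      intro j; rw [Matrix.mulVec_mulVec, ← pow_succ']
    simp only [pow_zero, Matrix.one_mulVec, h1, h2]
    abel
  have hSkpsd : ∀ K, (Sk K).PosSemidef := by
    intro K
    induction K with
    | zero => simpa [hSk] using (Matrix.PosSemidef.zero :
        (0 : Matrix (Fin n) (Fin n) ℝ).PosSemidef)
    | succ K ih =>
      rw [hSkrec K]
      exact (PPI.psd_mul_mul_transpose ih AK).add hSωpd.posSemidef
  have hSkpd : ∀ K, (Sk (K + 1)).PosDef := by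
    intro K
    rw [hSkrec K]
    exact Matrix.PosDef.posSemidef_add (PPI.psd_mul_mul_transpose (hSkpsd K) AK) hSωpd
  -- the reachable ellipsoids stay inside Rε
  have hSub : ∀ K, ellipsoid (Sk K) (mk K) r ⊆ Rε := by
    intro K
    induction K with
    | zero =>
      rintro x ⟨y, _, rfl⟩
      have hS0 : Sk 0 = 0 := by simp [hSk]
      have hm0 : mk 0 = s0 := by simp [hmk]
      rw [hS0, hm0, PPI.msqrt_zero]
      simpa using hs0
    | succ K ih =>
      rw [hSkrec K, hmkrec K]
      refine subset_trans (PPI.ellipsoid_subset_add AK (hSkpsd K) hSωpd _ _ _) ?_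
      refine subset_trans (Set.add_subset_add (Set.image_mono ih) (subset_refl _)) hinv
  -- measurability of the state
  have hmeas : ∀ K, Measurable (s K) := by
    intro K
    induction K with
    | zero => rw [hs0']; exact measurable_const
    | succ K ih =>
      have : s (K + 1) = fun ω => AK.mulVec (s K ω) + w K ω := funext (hs K)
      rw [this]
      exact (PPI.measurable_mulVec AK ih).add (hwmeas K)
  -- closed form for the error
  have herr : ∀ K ω, s K ω - mk K
      = ∑ a ∈ Finset.range K, (AK ^ (K - 1 - a)).mulVec (w a ω - μω) := by
    intro K
    induction K with
    | zero =>
      intro ω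
      have hm0 : mk 0 = s0 := by simp [hmk]
      rw [hs0', hm0]
      simp
    | succ K ih =>
      intro ω
      have h1 : s (K + 1) ω - mk (K + 1) = AK.mulVec (s K ω - mk K) + (w K ω - μω) := by
        rw [hs K ω, hmkrec K, Matrix.mulVec_sub]
        abel
      rw [h1, ih ω, PPI.mulVec_sum, Finset.sum_range_succ]
      congr 1
      · refine Finset.sum_congr rfl fun a ha => ?_
        have haK := Finset.mem_range.mp ha
        rw [Matrix.mulVec_mulVec, ← pow_succ',
          show K - 1 - a + 1 = K + 1 - 1 - a by omega]
      · simp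
  -- second moments of the error components
  have heMem : ∀ (i : Fin n), MemLp (fun ω => (s (m + 1) ω - mk (m + 1)) i) 2 ℙ := by
    intro i
    have h : (fun ω => (s (m + 1) ω - mk (m + 1)) i)
        = fun ω => ∑ a ∈ Finset.range (m + 1),
            (AK ^ (m + 1 - 1 - a)).mulVec (w a ω - μω) i := by
      funext ω
      rw [herr (m + 1) ω]
      simp [Finset.sum_apply]
    rw [h]
    refine memLp_finset_sum _ fun a _ => ?_
    have h2 : (fun ω => (AK ^ (m + 1 - 1 - a)).mulVec (w a ω - μω) i)
        = fun ω => ∑ p, (AK ^ (m + 1 - 1 - a)) i p * (w a ω p - μω p) := by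
      funext ω; simp [Matrix.mulVec, dotProduct]
    rw [h2]
    exact memLp_finset_sum _ fun p _ =>
      (((hw2 a p).sub (memLp_const _)).const_mul _)
  -- covariance of the error
  have hee : ∀ i j, ∫ ω, (s (m + 1) ω - mk (m + 1)) i * (s (m + 1) ω - mk (m + 1)) j ∂ℙ
      = Sk (m + 1) i j := by
    intro i j
    have hcov := PPI.cov_sum ℙ w hwindep hw2 μω hwmean Sω hwcov (m + 1)
      (fun a => AK ^ (m + 1 - 1 - a)) i j
    have hL : (fun ω => (s (m + 1) ω - mk (m + 1)) i * (s (m + 1) ω - mk (m + 1)) j)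
        = fun ω => (∑ a ∈ Finset.range (m + 1), (AK ^ (m + 1 - 1 - a)).mulVec (w a ω - μω) i)
            * (∑ a ∈ Finset.range (m + 1), (AK ^ (m + 1 - 1 - a)).mulVec (w a ω - μω) j) := by
      funext ω
      rw [herr (m + 1) ω]
      simp [Finset.sum_apply]
    have hR : (∑ a ∈ Finset.range (m + 1),
        AK ^ (m + 1 - 1 - a) * Sω * (AK ^ (m + 1 - 1 - a))ᵀ) = Sk (m + 1) := by
      rw [hSk]
      exact Finset.sum_range_reflect (fun a => AK ^ a * Sω * (AK ^ a)ᵀ) (m + 1)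
    rw [hL, hcov, hR]
  -- the quadratic form and Chebyshev/Markov argument
  set Q : Matrix (Fin n) (Fin n) ℝ := (Sk (m + 1))⁻¹ with hQdef
  have hQpd : Q.PosDef := Matrix.posDef_inv_iff.mpr (hSkpd m)
  set q : Ω → ℝ :=
    fun ω => (s (m + 1) ω - mk (m + 1)) ⬝ᵥ Q.mulVec (s (m + 1) ω - mk (m + 1)) with hqdef
  have hq_expand : q = fun ω => ∑ i, ∑ j,
      Q i j * ((s (m + 1) ω - mk (m + 1)) i * (s (m + 1) ω - mk (m + 1)) j) := by
    funext ω
    simp only [hqdef, dotProduct, Matrix.mulVec, Finset.mul_sum]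
    exact Finset.sum_congr rfl fun i _ => Finset.sum_congr rfl fun j _ => by ring
  have hq_int : Integrable q ℙ := by
    rw [hq_expand]
    exact integrable_finset_sum _ fun i _ => integrable_finset_sum _ fun j _ =>
      (PPI.integrable_mul2 (heMem i) (heMem j)).const_mul _
  have hq_integral : ∫ ω, q ω ∂ℙ = (n : ℝ) := by
    rw [hq_expand]
    beta_reduce
    refine (integral_finset_sum _ (fun i _ => integrable_finset_sum _ fun j _ =>
      (PPI.integrable_mul2 (heMem i) (heMem j)).const_mul _)).trans ?_
    have hstep : ∀ i : Fin n, ∫ ω, ∑ j,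
        Q i j * ((s (m + 1) ω - mk (m + 1)) i * (s (m + 1) ω - mk (m + 1)) j) ∂ℙ
        = ∑ j, Q i j * Sk (m + 1) i j := by
      intro i
      rw [integral_finset_sum _ (fun j _ =>
        (PPI.integrable_mul2 (heMem i) (heMem j)).const_mul _)]
      refine Finset.sum_congr rfl fun j _ => ?_
      rw [integral_const_mul, hee i j]
    rw [Finset.sum_congr rfl (fun i _ => hstep i)]
    have hsym : ∀ i j, Sk (m + 1) j i = Sk (m + 1) i j := by
      intro i j
      have h := (hSkpsd (m + 1)).isHermitian.apply j i
      simpa using h.symm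
    have hQS : Q * Sk (m + 1) = 1 :=
      Matrix.nonsing_inv_mul _ ((hSkpd m).det_pos.ne'.isUnit)
    calc ∑ i, ∑ j, Q i j * Sk (m + 1) i j
        = ∑ i : Fin n, (Q * Sk (m + 1)) i i := by
          refine Finset.sum_congr rfl fun i _ => ?_
          rw [Matrix.mul_apply]
          exact Finset.sum_congr rfl fun j _ => by rw [hsym i j]
      _ = (n : ℝ) := by
          rw [hQS]
          simp [Matrix.one_apply_eq, Finset.card_univ]
  have hq_nonneg : ∀ ω, 0 ≤ q ω := fun ω => PPI.psd_quad_nonneg hQpd.posSemidef _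
  have hq_meas : Measurable q := by
    rw [hq_expand]
    refine Finset.measurable_sum _ fun i _ => Finset.measurable_sum _ fun j _ => ?_
    have hcomp : ∀ i0 : Fin n, Measurable fun ω => (s (m + 1) ω - mk (m + 1)) i0 := by
      intro i0
      have : (fun ω => (s (m + 1) ω - mk (m + 1)) i0)
          = fun ω => s (m + 1) ω i0 - mk (m + 1) i0 := by funext ω; simp
      rw [this]
      exact ((measurable_pi_apply i0).comp (hmeas (m + 1))).sub measurable_const
    exact measurable_const.mul ((hcomp i).mul (hcomp j))
  have hn' : (0 : ℝ) < n := Nat.cast_pos.mpr hn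
  have markov := mul_meas_ge_le_integral_of_nonneg (ae_of_all _ hq_nonneg) hq_int r
  rw [hq_integral] at markov
  have htoReal : (ℙ {x | r ≤ q x}).toReal ≤ ε := by
    rw [hr, div_mul_eq_mul_div] at markov
    have key : (n : ℝ) * (ℙ {x | r ≤ q x}).toReal ≤ (n : ℝ) * ε :=
      (div_le_iff₀ hε0).mp markov
    exact (mul_le_mul_iff_right₀ hn').mp key
  have hPA : ℙ {x | r ≤ q x} ≤ ENNReal.ofReal ε := by
    rw [← ENNReal.ofReal_toReal (measure_ne_top ℙ {x | r ≤ q x})]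
    exact ENNReal.ofReal_le_ofReal htoReal
  have hA_meas : MeasurableSet {x | r ≤ q x} := measurableSet_le measurable_const hq_meas
  have hsubset : {x | r ≤ q x}ᶜ ⊆ {ω | s (m + 1) ω ∈ Rε} := by
    intro ω hω
    have hω' : ¬ r ≤ q ω := hω
    have hle : q ω ≤ r := (not_le.mp hω').le
    exact hSub (m + 1) (PPI.mem_ellipsoid_of_quad (hSkpd m) hle)
  calc ENNReal.ofReal (1 - ε) = 1 - ENNReal.ofReal ε := by
        rw [ENNReal.ofReal_sub _ hε0.le, ENNReal.ofReal_one]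
    _ ≤ 1 - ℙ {x | r ≤ q x} := tsub_le_tsub_left hPA 1
    _ = ℙ {x | r ≤ q x}ᶜ := (prob_compl_eq_one_sub hA_meas).symm
    _ ≤ ℙ {ω | s (m + 1) ω ∈ Rε} := measure_mono hsubset
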